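/- (Unique extension of a torus morphism to the étale algebra.) Let F be an infinite field of characteristic not 2, K/F a quadratic étale algebra, E, E′ étale F-algebras of degree n, and F̄ an algebraic closure of F. Suppose T : K_{E′} ⊗_F F̄ → K_E ⊗_F F̄ is an invertible F̄-linear map such that for every x ∈ K_E¹ there exists τ(x) ∈ K_{E′}¹ with T ∘ (M_{τ(x)} ⊗ id) ∘ T⁻¹ = M_x ⊗ id. Then for every x ∈ K_E there exists a unique τ(x) ∈ K_{E′} with T ∘ (M_{τ(x)} ⊗ id) ∘ T⁻¹ = M_x ⊗ id. -/

import Mathlib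

open scoped TensorProduct

/-! The elements `x` of `K_E` for which `M_x ⊗ id` is `T`-conjugate to some `M_t ⊗ id` form an
`F`-subalgebra `S` (base change and conjugation by `T` are algebra maps), and `t` is unique since
`t ↦ M_t ⊗ id` is injective. By hypothesis `S` contains the norm-one group, and in a
finite-dimensional algebra with involution `σ` over an infinite field of characteristic `≠ 2`
this forces `S = ⊤`. If `σ y = -y` and `1 ± y` are units, the Cayley transform
`x = (1 + y) / (1 - y)` has norm one, so `(1 - y)⁻¹ = (x + 1) / 2 ∈ S`, hence `1 - y ∈ S` because
a finite-dimensional subalgebra is closed under inverses. Applying this to `t • y` for a generic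
`t ∈ F` puts every anti-invariant element in `S`; multiplying by the anti-invariant unit `δ ⊗ 1`
turns invariant elements into anti-invariant ones. -/

/-- The norm map `x ↦ x · conj x` on units of an algebra with involution. -/
def normMap {F A : Type} [Field F] [CommRing A] [Algebra F A]
    (σ : A →ₐ[F] A) : Aˣ →* Aˣ :=
  (MonoidHom.id Aˣ) * (Units.map σ.toRingHom.toMonoidHom)

/-- The norm-one group `A¹ = {x ∈ A× : x · σ x = 1}`. -/
def normOneGroup {F A : Type} [Field F] [CommRing A] [Algebra F A]
    (σ : A →ₐ[F] A) : Subgroup Aˣ :=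
  (normMap σ).ker

/-- The involution `σ = conj ⊗ id` on `K_E = K ⊗[F] E`. -/
noncomputable def tensorConj {F K E : Type} [Field F] [CommRing K] [Algebra F K]
    [CommRing E] [Algebra F E] (conj : K →ₐ[F] K) :
    (K ⊗[F] E) →ₐ[F] (K ⊗[F] E) :=
  Algebra.TensorProduct.map conj (AlgHom.id F E)

/-- Multiplication by `z`, as an `F`-linear endomorphism. -/
noncomputable def mulEnd (F A : Type) [Field F] [CommRing A] [Algebra F A] (z : A) :
    A →ₗ[F] A :=
  (Algebra.lmul F A z : Module.End F A)

section FiniteDimensional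

variable {F A : Type} [Field F] [Ring A] [Algebra F A]

theorem spectrum_lmul (z : A) : spectrum F (Algebra.lmul F A z) = spectrum F z := by
  ext c
  rw [spectrum.mem_iff, spectrum.mem_iff, ← Algebra.lmul_isUnit_iff (R := F) (A := A), map_sub,
    AlgHom.commutes]

variable [FiniteDimensional F A]

theorem finite_spectrum (z : A) : (spectrum F z).Finite := by
  rw [← spectrum_lmul]
  exact Module.End.finite_spectrum _

theorem finite_setOf_not_isUnit_one_add_smul (z : A) :
    {t : F | ¬IsUnit (1 + t • z)}.Finite := by
  refine ((finite_spectrum (F := F) z).image fun c => -c⁻¹).subset fun t ht => ?_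
  have ht0 : t ≠ 0 := by rintro rfl; simp at ht
  refine ⟨-t⁻¹, spectrum.mem_iff.2 fun h => ht ?_, by simp⟩
  have : 1 + t • z = algebraMap F A (-t) * (algebraMap F A (-t⁻¹) - z) := by
    rw [mul_sub, ← map_mul, neg_mul_neg, mul_inv_cancel₀ ht0, map_one, Algebra.smul_def, map_neg,
      neg_mul, sub_neg_eq_add]
  rw [this]
  exact ((neg_ne_zero.2 ht0).isUnit.map _).mul h

theorem exists_ne_zero_isUnit_one_add_smul_and_one_sub_smul [Infinite F] (z : A) :
    ∃ t : F, t ≠ 0 ∧ IsUnit (1 + t • z) ∧ IsUnit (1 - t • z) := by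
  have hbad := ((Set.finite_singleton (0 : F)).union (finite_setOf_not_isUnit_one_add_smul z)).union
    (finite_setOf_not_isUnit_one_add_smul (-z))
  obtain ⟨t, ht⟩ := hbad.infinite_compl.nonempty
  simp only [Set.mem_compl_iff, Set.mem_union, Set.mem_singleton_iff, Set.mem_ofPred_eq,
    not_or, not_not, smul_neg, ← sub_eq_add_neg] at ht
  exact ⟨t, ht.1.1, ht.1.2, ht.2⟩

theorem Subalgebra.inv_mem_of_finiteDimensional (S : Subalgebra F A) {w : Aˣ}
    (hw : (w : A) ∈ S) : ((w⁻¹ : Aˣ) : A) ∈ S := by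
  have hinj : Function.Injective (Algebra.lmul F S ⟨w, hw⟩) := fun a b hab =>
    Subtype.ext (w.isUnit.mul_right_injective (congrArg Subtype.val hab))
  obtain ⟨s, hs⟩ := LinearMap.injective_iff_surjective.mp hinj 1
  rw [Units.inv_eq_of_mul_eq_one_right (congrArg Subtype.val hs)]
  exact s.2

end FiniteDimensional

section NormOneGroup

variable {F A : Type} [Field F] [CommRing A] [Algebra F A]

theorem mem_normOneGroup_iff {σ : A →ₐ[F] A} {u : Aˣ} :
    u ∈ normOneGroup σ ↔ (u : A) * σ u = 1 := by
  simp [normOneGroup, normMap, Units.ext_iff]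

variable [FiniteDimensional F A] {σ : A →ₐ[F] A} {S : Subalgebra F A}

theorem mem_of_map_eq_neg_of_isUnit (h2 : (2 : F) ≠ 0)
    (hS : ∀ u ∈ normOneGroup σ, (u : A) ∈ S) {y : A} (hy : σ y = -y)
    (hplus : IsUnit (1 + y)) (hminus : IsUnit (1 - y)) : y ∈ S := by
  set v := hminus.unit⁻¹
  have hv : (1 - y) * v = 1 := hminus.mul_val_inv
  have hσv : (1 + y) * σ v = 1 := by
    simpa only [map_mul, map_sub, map_one, hy, sub_neg_eq_add] using congrArg σ hv
  have hx : hplus.unit * v ∈ normOneGroup σ := by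
    rw [mem_normOneGroup_iff, Units.val_mul, IsUnit.unit_spec, map_mul, map_add, map_one, hy]
    linear_combination (1 + y) * σ v * hv + hσv
  have hvS : (v : A) ∈ S := by
    have hsum : (2⁻¹ : F) • ((hplus.unit * v : Aˣ) + 1 : A) = v := by
      have htwo : (1 + y) * v + 1 = (2 : F) • (v : A) := by
        rw [two_smul]
        linear_combination -hv
      rw [Units.val_mul, IsUnit.unit_spec, htwo, smul_smul, inv_mul_cancel₀ h2, one_smul]
    exact hsum ▸ S.smul_mem (S.add_mem (hS _ hx) S.one_mem) _
  have := S.inv_mem_of_finiteDimensional hvS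
  rw [inv_inv, IsUnit.unit_spec] at this
  simpa using S.sub_mem S.one_mem this

theorem mem_of_map_eq_neg [Infinite F] (h2 : (2 : F) ≠ 0)
    (hS : ∀ u ∈ normOneGroup σ, (u : A) ∈ S) {y : A} (hy : σ y = -y) : y ∈ S := by
  obtain ⟨t, ht0, hplus, hminus⟩ := exists_ne_zero_isUnit_one_add_smul_and_one_sub_smul (F := F) y
  have hty : t • y ∈ S :=
    mem_of_map_eq_neg_of_isUnit h2 hS (by rw [map_smul, hy, smul_neg]) hplus hminus
  simpa [smul_smul, ht0] using S.smul_mem hty t⁻¹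

theorem Subalgebra.eq_top_of_normOneGroup_subset [Infinite F] (h2 : (2 : F) ≠ 0)
    (hσ : ∀ x, σ (σ x) = x) {D : Aˣ} (hD : σ D = -D)
    (hS : ∀ u ∈ normOneGroup σ, (u : A) ∈ S) : S = ⊤ := by
  have hDinv := S.inv_mem_of_finiteDimensional (mem_of_map_eq_neg h2 hS hD)
  refine eq_top_iff.2 fun x _ => ?_
  have hanti : x - σ x ∈ S := mem_of_map_eq_neg h2 hS (by rw [map_sub, hσ, neg_sub])
  have hsym : D * (x + σ x) ∈ S :=
    mem_of_map_eq_neg h2 hS (by rw [map_mul, map_add, hσ, hD, add_comm, neg_mul])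
  have hx : x = (2⁻¹ : F) • ((x - σ x) + ↑D⁻¹ * (D * (x + σ x))) := by
    rw [Units.inv_mul_cancel_left, sub_add_add_cancel, ← two_smul F, smul_smul,
      inv_mul_cancel₀ h2, one_smul]
  rw [hx]
  exact S.smul_mem (S.add_mem hanti (S.mul_mem hDinv hsym)) _

end NormOneGroup

section QuadraticAlgebra

variable {F K : Type} [Field F] [CommRing K] [Algebra F K]

theorem exists_unit_map_eq_neg (hK2 : Module.finrank F K = 2)
    (hKet : ∀ x : K, x ≠ 0 → ∃ y : K, Algebra.trace F K (x * y) ≠ 0)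
    (conj : K →ₐ[F] K) (hconj : ∀ x, conj (conj x) = x)
    (hfix : ∀ x : K, conj x = x ↔ ∃ a : F, algebraMap F K a = x) :
    ∃ δ : Kˣ, conj δ = -δ := by
  have : Module.Finite F K := Module.finite_of_finrank_eq_succ hK2
  have : Nontrivial K := Module.nontrivial_of_finrank_eq_succ hK2
  obtain ⟨k, hk⟩ : ∃ k : K, conj k ≠ k := by
    by_contra! h
    have hbot : (⊥ : Subalgebra F K) = ⊤ :=
      eq_top_iff.2 fun x _ => Algebra.mem_bot.2 ((hfix x).1 (h x))
    rw [Subalgebra.bot_eq_top_iff_finrank_eq_one, hK2] at hbot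
    exact absurd hbot (by norm_num)
  set δ := k - conj k
  have hδ : conj δ = -δ := by rw [map_sub, hconj, neg_sub]
  have hδ0 : δ ≠ 0 := sub_ne_zero.2 hk.symm
  obtain ⟨a, ha⟩ := (hfix (δ * δ)).1 (by rw [map_mul, hδ, neg_mul_neg])
  have ha0 : a ≠ 0 := by
    rintro rfl
    obtain ⟨y, hy⟩ := hKet δ hδ0
    have hnil : IsNilpotent δ := ⟨2, by rw [sq, ← ha, map_zero]⟩
    exact hy (Algebra.isNilpotent_trace_of_isNilpotent
      ((Commute.all δ y).isNilpotent_mul_right hnil)).eq_zero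
  have hunit : IsUnit δ := isUnit_mul_self_iff.1 (ha ▸ ha0.isUnit.map (algebraMap F K))
  exact ⟨hunit.unit, hδ⟩

variable {E : Type} [CommRing E] [Algebra F E]

theorem tensorConj_tmul (conj : K →ₐ[F] K) (k : K) (e : E) :
    tensorConj conj (k ⊗ₜ[F] e) = conj k ⊗ₜ e := rfl

theorem tensorConj_tensorConj {conj : K →ₐ[F] K} (hconj : ∀ x, conj (conj x) = x)
    (z : K ⊗[F] E) : tensorConj conj (tensorConj conj z) = z := by
  induction z using TensorProduct.induction_on with
  | zero => simp only [map_zero]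
  | tmul k e => rw [tensorConj_tmul, tensorConj_tmul, hconj]
  | add x y hx hy => rw [map_add, map_add, hx, hy]

end QuadraticAlgebra

section ConjugateMultiplications

variable (F L A : Type) [Field F] [CommRing L] [Algebra F L] [CommRing A] [Algebra F A]

noncomputable def baseChangeMul : A →ₐ[F] Module.End L (L ⊗[F] A) :=
  (Module.End.baseChangeHom F L A).comp (Algebra.lmul F A)

variable {F L A}

theorem baseChangeMul_apply (x : A) :
    baseChangeMul F L A x = LinearMap.baseChange L (mulEnd F A x) := rfl

theorem baseChangeMul_injective [Nontrivial L] : Function.Injective (baseChangeMul F L A) := by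
  intro x y h
  have h1 := LinearMap.congr_fun h (1 ⊗ₜ 1)
  simp only [baseChangeMul_apply, LinearMap.baseChange_tmul, mulEnd, Algebra.coe_lmul_eq_mul,
    LinearMap.mul_apply', mul_one] at h1
  exact Algebra.TensorProduct.includeRight_injective (A := L) (algebraMap F L).injective h1

variable {B : Type} [CommRing B] [Algebra F B]

noncomputable def conjMulSubalgebra (T : L ⊗[F] B ≃ₗ[L] L ⊗[F] A) : Subalgebra F A :=
  (((T.conjAlgEquiv F).toAlgHom.comp (baseChangeMul F L B)).range).comap (baseChangeMul F L A)

theorem mem_conjMulSubalgebra_iff {T : L ⊗[F] B ≃ₗ[L] L ⊗[F] A} {x : A} :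
    x ∈ conjMulSubalgebra T ↔ ∃ t : B,
      T.toLinearMap ∘ₗ LinearMap.baseChange L (mulEnd F B t) ∘ₗ T.symm.toLinearMap
        = LinearMap.baseChange L (mulEnd F A x) := Iff.rfl

end ConjugateMultiplications

theorem stmt17_general (F K E E' Fbar : Type) [Field F] [Infinite F]
    [CommRing K] [Algebra F K] [CommRing E] [Algebra F E] [CommRing E'] [Algebra F E']
    [Field Fbar] [Algebra F Fbar]
    (hchar : (2 : F) ≠ 0)
    (hK2 : Module.finrank F K = 2)
    (hKet : ∀ x : K, x ≠ 0 → ∃ y : K, Algebra.trace F K (x * y) ≠ 0)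
    (conj : K →ₐ[F] K)
    (hconj : ∀ x, conj (conj x) = x)
    (hfix : ∀ x : K, conj x = x ↔ ∃ a : F, algebraMap F K a = x)
    [Module.Finite F E]
    (T : (Fbar ⊗[F] (K ⊗[F] E')) ≃ₗ[Fbar] (Fbar ⊗[F] (K ⊗[F] E)))
    (hyp : ∀ x : (K ⊗[F] E)ˣ, x ∈ normOneGroup (tensorConj conj) →
      ∃ t : (K ⊗[F] E')ˣ, t ∈ normOneGroup (tensorConj conj) ∧
        T.toLinearMap
            ∘ₗ LinearMap.baseChange Fbar (mulEnd F (K ⊗[F] E') (t : K ⊗[F] E'))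
            ∘ₗ T.symm.toLinearMap
          = LinearMap.baseChange Fbar (mulEnd F (K ⊗[F] E) (x : K ⊗[F] E))) :
    ∀ x : K ⊗[F] E, ∃! t : K ⊗[F] E',
      T.toLinearMap
          ∘ₗ LinearMap.baseChange Fbar (mulEnd F (K ⊗[F] E') t)
          ∘ₗ T.symm.toLinearMap
        = LinearMap.baseChange Fbar (mulEnd F (K ⊗[F] E) x) := by
  have : Module.Finite F K := Module.finite_of_finrank_eq_succ hK2
  obtain ⟨δ, hδ⟩ := exists_unit_map_eq_neg hK2 hKet conj hconj hfix
  let D : (K ⊗[F] E)ˣ := Units.map (Algebra.TensorProduct.includeLeft : K →ₐ[F] K ⊗[F] E) δ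
  have hD : tensorConj conj (D : K ⊗[F] E) = -D := by
    simp only [D, Units.coe_map, MonoidHom.coe_coe, Algebra.TensorProduct.includeLeft_apply,
      tensorConj_tmul, hδ, TensorProduct.neg_tmul]
  have htop : conjMulSubalgebra T = ⊤ :=
    Subalgebra.eq_top_of_normOneGroup_subset hchar (tensorConj_tensorConj hconj) hD
      fun u hu => mem_conjMulSubalgebra_iff.2 <| let ⟨t, _, ht⟩ := hyp u hu; ⟨t, ht⟩
  intro x
  obtain ⟨t, ht⟩ := mem_conjMulSubalgebra_iff.1 (htop ▸ Algebra.mem_top : x ∈ conjMulSubalgebra T)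
  refine ⟨t, ht, fun t' ht' => baseChangeMul_injective (F := F) (L := Fbar) ?_⟩
  simpa only [baseChangeMul_apply] using (T.conjAlgEquiv F).injective (ht'.trans ht.symm)

/-- Unique extension of a torus morphism to the étale algebra:
if `T : K_{E′} ⊗_F F̄ → K_E ⊗_F F̄` is an invertible `F̄`-linear map such that
every multiplication operator `M_x ⊗ id` with `x ∈ K_E¹` is conjugated by `T`
from some `M_{τ(x)} ⊗ id` with `τ(x) ∈ K_{E′}¹`, then for every `x ∈ K_E` there
is a unique `τ(x) ∈ K_{E′}` with `T ∘ (M_{τ(x)} ⊗ id) ∘ T⁻¹ = M_x ⊗ id`. -/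
theorem stmt17 (F K E E' Fbar : Type) [Field F] [Infinite F]
    [CommRing K] [Algebra F K] [CommRing E] [Algebra F E] [CommRing E'] [Algebra F E']
    [Field Fbar] [Algebra F Fbar] [IsAlgClosure F Fbar] (n : ℕ)
    (hchar : (2 : F) ≠ 0)
    (hK2 : Module.finrank F K = 2)
    (hKet : ∀ x : K, x ≠ 0 → ∃ y : K, Algebra.trace F K (x * y) ≠ 0)
    (conj : K →ₐ[F] K)
    (hconj : ∀ x, conj (conj x) = x)
    (hfix : ∀ x : K, conj x = x ↔ ∃ a : F, algebraMap F K a = x)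
    [Module.Finite F E] (hEn : Module.finrank F E = n)
    (hEet : ∀ x : E, x ≠ 0 → ∃ y : E, Algebra.trace F E (x * y) ≠ 0)
    [Module.Finite F E'] (hE'n : Module.finrank F E' = n)
    (hE'et : ∀ x : E', x ≠ 0 → ∃ y : E', Algebra.trace F E' (x * y) ≠ 0)
    (T : (Fbar ⊗[F] (K ⊗[F] E')) ≃ₗ[Fbar] (Fbar ⊗[F] (K ⊗[F] E)))
    (hyp : ∀ x : (K ⊗[F] E)ˣ, x ∈ normOneGroup (tensorConj conj) →
      ∃ t : (K ⊗[F] E')ˣ, t ∈ normOneGroup (tensorConj conj) ∧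
        T.toLinearMap
            ∘ₗ LinearMap.baseChange Fbar (mulEnd F (K ⊗[F] E') (t : K ⊗[F] E'))
            ∘ₗ T.symm.toLinearMap
          = LinearMap.baseChange Fbar (mulEnd F (K ⊗[F] E) (x : K ⊗[F] E))) :
    ∀ x : K ⊗[F] E, ∃! t : K ⊗[F] E',
      T.toLinearMap
          ∘ₗ LinearMap.baseChange Fbar (mulEnd F (K ⊗[F] E') t)
          ∘ₗ T.symm.toLinearMap
        = LinearMap.baseChange Fbar (mulEnd F (K ⊗[F] E) x) :=
  stmt17_general F K E E' Fbar hchar hK2 hKet conj hconj hfix T hyp
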